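/- arXiv:1308.0180 — 7 statements merged into one kernel-verified Lean document; each statement's English description precedes it below -/
import Mathlib

section
/- Let X, Y, Z be pairwise congruent walks of length n in a digraph H. Then Z protects Y from X if and only if there exists a subscript s such that the initial segment x₀,…,x_s avoids z₀,…,z_s and the final segment z_{s+1},…,z_n avoids y_{s+1},…,y_n. -/
namespace DigraphListHom

variable {V W : Type*}

/-- One step of a walk: forward if `dir = true`, backward otherwise. -/
def Step (H : V → V → Prop) (u v : V) (dir : Bool) : Prop :=
  if dir then H u v else H v u

/-- `x` is a walk in `H` with direction pattern `d`. -/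
def IsWalk (H : V → V → Prop) {n : ℕ} (d : Fin n → Bool) (x : Fin (n + 1) → V) : Prop :=
  ∀ i : Fin n, Step H (x i.castSucc) (x i.succ) (d i)

/-- `x_i y_{i+1}` is a faithful edge from `X` to `Y` at position `i`. -/
def FaithfulAt (H : V → V → Prop) {n : ℕ} (d : Fin n → Bool) (x y : Fin (n + 1) → V)
    (i : Fin n) : Prop :=
  Step H (x i.castSucc) (y i.succ) (d i)

/-- `X` avoids `Y`: there is no faithful edge from `X` to `Y`. -/
def Avoids (H : V → V → Prop) {n : ℕ} (d : Fin n → Bool) (x y : Fin (n + 1) → V) : Prop :=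
  ∀ i, ¬ FaithfulAt H d x y i

/-- `Z` protects `Y` from `X`: faithful edges `x_i z_{i+1}` and `z_j y_{j+1}` imply `j ≤ i`. -/
def Protects (H : V → V → Prop) {n : ℕ} (d : Fin n → Bool) (x y z : Fin (n + 1) → V) : Prop :=
  ∀ i j : Fin n, FaithfulAt H d x z i → FaithfulAt H d z y j → (j : ℕ) ≤ (i : ℕ)

/-- `H` contains a circular `N`: congruent walks `X` from `x` to `x`, `Y` from `y` to `y`,
`Z` from `y` to `x`, with `X` avoiding `Y` and `Z` protecting `Y` from `X`. -/
def CircularN (H : V → V → Prop) : Prop :=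
  ∃ n : ℕ, 0 < n ∧ ∃ (d : Fin n → Bool) (x y z : Fin (n + 1) → V),
    IsWalk H d x ∧ IsWalk H d y ∧ IsWalk H d z ∧
    x (Fin.last n) = x 0 ∧ y (Fin.last n) = y 0 ∧
    z 0 = y 0 ∧ z (Fin.last n) = x 0 ∧
    Avoids H d x y ∧ Protects H d x y z

/-- Arc relation of the pair digraph `H⁺` (on ambient pairs). -/
def PairArc (H : V → V → Prop) (p q : V × V) : Prop :=
  (H p.1 q.1 ∧ H p.2 q.2 ∧ ¬ H p.1 q.2) ∨ (H q.1 p.1 ∧ H q.2 p.2 ∧ ¬ H q.2 p.1)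

/-- Arc relation of `H⁺` restricted to genuine vertices (pairs of distinct vertices). -/
def PairArcD (H : V → V → Prop) (p q : V × V) : Prop :=
  p.1 ≠ p.2 ∧ q.1 ≠ q.2 ∧ PairArc H p q

/-- Reachability in `H⁺`. -/
def PairReach (H : V → V → Prop) : V × V → V × V → Prop :=
  Relation.ReflTransGen (PairArcD H)

/-- Mutual reachability in `H⁺` (same strong component). -/
def SameSCC (H : V → V → Prop) (p q : V × V) : Prop :=
  PairReach H p q ∧ PairReach H q p

/-- `C` is a strong component of the digraph with arc relation `R`. -/
def IsStrongComponent {α : Type*} (R : α → α → Prop) (C : Set α) : Prop :=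
  ∃ a, C = {b | Relation.ReflTransGen R a b ∧ Relation.ReflTransGen R b a}

/-- There is a directed path with `m` vertices in the condensation of `H⁺`
ending at the strong component of `p`. -/
def CondChain (H : V → V → Prop) (p : V × V) (m : ℕ) : Prop :=
  ∃ r : Fin m → V × V,
    (∀ i, (r i).1 ≠ (r i).2) ∧
    (∀ i j : Fin m, i < j → PairReach H (r i) (r j) ∧ ¬ PairReach H (r j) (r i)) ∧
    (∀ i, PairReach H (r i) p) ∧
    (∀ h : 0 < m, PairReach H p (r ⟨m - 1, Nat.sub_lt h Nat.one_pos⟩))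

/-- `μ(p)`: the maximum number of vertices of a directed path in the condensation of `H⁺`
ending at the strong component of `p` (with `μ(x,x) = 0`). -/
noncomputable def mu (H : V → V → Prop) (p : V × V) : ℕ :=
  sSup {m | CondChain H p m}

/-- The unordered pair `{u, v}` is `k`-allowed with respect to the ordering `ord` of `V(H⁺)`:
neither `(u,v)` nor `(v,u)` is `k`-processed (i.e. has position `> k`). -/
def KAllowed (ord : V × V → ℕ) (k : ℕ) (u v : V) : Prop :=
  u = v ∨ (ord (u, v) ≤ k ∧ ord (v, u) ≤ k)

/-- `ord` is an ordering of the vertices of `H⁺` listing the strong components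
consecutively, in an order in which each component is a sink among the later ones. -/
def GoodOrd (H : V → V → Prop) (ord : V × V → ℕ) : Prop :=
  (∀ p q : V × V, p.1 ≠ p.2 → q.1 ≠ q.2 → ord p = ord q → p = q) ∧
  (∀ p q : V × V, p.1 ≠ p.2 → q.1 ≠ q.2 → PairReach H p q → ¬ PairReach H q p →
    ord p < ord q) ∧
  (∀ p q r : V × V, p.1 ≠ p.2 → q.1 ≠ q.2 → r.1 ≠ r.2 →
    SameSCC H p q → ord p ≤ ord r → ord r ≤ ord q → SameSCC H p r)

/-- `f` is an `L`-homomorphism of `G` to `H`. -/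
def IsLHom (H : V → V → Prop) (G : W → W → Prop) (L : W → Set V) (f : W → V) : Prop :=
  (∀ u v, G u v → H (f u) (f v)) ∧ ∀ w, f w ∈ L w

/-- Arc relation of the triple digraph `Tr(G,L)`. -/
def TrArc (H : V → V → Prop) (G : W → W → Prop) (L : W → Set V)
    (p q : W × V × V) : Prop :=
  p.2.1 ∈ L p.1 ∧ p.2.2 ∈ L p.1 ∧ q.2.1 ∈ L q.1 ∧ q.2.2 ∈ L q.1 ∧
  G p.1 q.1 ∧ H p.2.1 q.2.1 ∧ H p.2.2 q.2.2 ∧ ¬ H p.2.1 q.2.2 ∧ ¬ H p.2.2 q.2.1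

/-- Symmetrization of the triple-digraph arc relation (for weak connectivity). -/
def TrSym (H : V → V → Prop) (G : W → W → Prop) (L : W → Set V)
    (p q : W × V × V) : Prop :=
  TrArc H G L p q ∨ TrArc H G L q p

/-- Weak connectivity in the triple digraph `Tr(G,L)`. -/
def WConn (H : V → V → Prop) (G : W → W → Prop) (L : W → Set V) :
    W × V × V → W × V × V → Prop :=
  Relation.ReflTransGen (TrSym H G L)

/-- `f` is a ternary polymorphism of `H`. -/
def Polymorphism3 (H : V → V → Prop) (f : V → V → V → V) : Prop :=
  ∀ a a' b b' c c', H a a' → H b b' → H c c' → H (f a b c) (f a' b' c')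

/-- `f` is conservative. -/
def Conservative3 (f : V → V → V → V) : Prop :=
  ∀ a b c, f a b c = a ∨ f a b c = b ∨ f a b c = c

/-- `f 1, …, f k` satisfy the Hagemann–Mitschke identities. -/
def HMChain (f : ℕ → V → V → V → V) (k : ℕ) : Prop :=
  (∀ x y, f 1 x y y = x) ∧
  (∀ i, 1 ≤ i → i < k → ∀ x y, f i x x y = f (i + 1) x y y) ∧
  (∀ x y, f k x x y = y)

/-- `H` contains a pair of independent edges. -/
def IndependentEdges (H : V → V → Prop) : Prop :=
  ∃ a b c d, H a b ∧ H c d ∧ ¬ H a d ∧ ¬ H c b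

/-- `H` contains a bicycle. -/
def Bicycle (H : V → V → Prop) : Prop :=
  ∃ n : ℕ, 0 < n ∧ ∃ x y : Fin (n + 1) → V,
    x (Fin.last n) = x 0 ∧ y (Fin.last n) = y 0 ∧
    ∀ i : Fin n, H (x i.castSucc) (x i.succ) ∧ H (y i.castSucc) (y i.succ) ∧
      ¬ H (x i.castSucc) (y i.succ) ∧ H (y i.castSucc) (x i.succ)

/-- `a` is an `i`-distinguisher of `a, b, c`. -/
def IDist (H : V → V → Prop) (i : ℕ) (a b c : V) : Prop :=
  ∃ (n : ℕ) (d : Fin n → Bool) (X Y Z : Fin (n + 1) → V),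
    IsWalk H d X ∧ IsWalk H d Y ∧ IsWalk H d Z ∧
    X 0 = a ∧ Y 0 = b ∧ Z 0 = c ∧
    Y (Fin.last n) = Z (Fin.last n) ∧
    i ≤ mu H (X (Fin.last n), Y (Fin.last n)) ∧
    Avoids H d Y X ∧ Avoids H d Z X

theorem forall_le_iff_exists_cut {n : ℕ} (P Q : Fin n → Prop) :
    (∀ i j, P i → Q j → (j : ℕ) ≤ (i : ℕ)) ↔
      ∃ s : ℕ, s ≤ n ∧
        (∀ i : Fin n, (i : ℕ) < s → ¬ P i) ∧ (∀ j : Fin n, s < (j : ℕ) → ¬ Q j) := by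
  classical
  constructor
  · intro hPQ
    -- the cut is the first index carrying `P`, or `n` if there is none
    have hex : ∃ m, m = n ∨ ∃ hm : m < n, P ⟨m, hm⟩ := ⟨n, Or.inl rfl⟩
    refine ⟨Nat.find hex, Nat.find_min' hex (Or.inl rfl), ?_, ?_⟩
    · intro i hi hPi
      exact Nat.find_min hex hi (Or.inr ⟨i.isLt, hPi⟩)
    · intro j hj hQj
      rcases Nat.find_spec hex with hs | ⟨hs, hPs⟩
      · omega
      · have hjs : (j : ℕ) ≤ Nat.find hex := hPQ _ j hPs hQj
        omega
  · rintro ⟨s, -, hP, hQ⟩ i j hPi hQj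
    have hsi : s ≤ i := not_lt.mp fun hlt => hP i hlt hPi
    have hjs : (j : ℕ) ≤ s := not_lt.mp fun hlt => hQ j hlt hQj
    exact hjs.trans hsi

theorem statement1_general (H : V → V → Prop) {n : ℕ} (d : Fin n → Bool)
    (x y z : Fin (n + 1) → V) :
    Protects H d x y z ↔
      ∃ s : ℕ, s ≤ n ∧
        (∀ i : Fin n, (i : ℕ) < s → ¬ FaithfulAt H d x z i) ∧
        (∀ j : Fin n, s < (j : ℕ) → ¬ FaithfulAt H d z y j) :=
  forall_le_iff_exists_cut _ _

/-- `Z` protects `Y` from `X` iff there is a subscript `s` splitting the walks. -/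
theorem statement1 (H : V → V → Prop) {n : ℕ} (d : Fin n → Bool)
    (x y z : Fin (n + 1) → V)
    (hx : IsWalk H d x) (hy : IsWalk H d y) (hz : IsWalk H d z) :
    Protects H d x y z ↔
      ∃ s : ℕ, s ≤ n ∧
        (∀ i : Fin n, (i : ℕ) < s → ¬ FaithfulAt H d x z i) ∧
        (∀ j : Fin n, s < (j : ℕ) → ¬ FaithfulAt H d z y j) :=
  statement1_general H d x y z

end DigraphListHom
end

section
/- If a digraph H contains an extended N with walks X, Y, Z such that Y also avoids X, then H contains a circular N. -/
/-!
Walk along `X`, `Y`, `Z` and then back along `X`, `Y`, `X`. The doubled walks `X X⁻¹`, `Y Y⁻¹`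
and `Z X⁻¹` are congruent, the first two are closed and the third runs from `y` to `x`. A
faithful edge between two reversed walks is a faithful edge in the opposite direction between the
original ones, so on the way back every faithful edge into `Y⁻¹` would be a faithful edge from
`Y` to `X`, which `Y` avoiding `X` rules out. Hence `X X⁻¹` avoids `Y Y⁻¹`, and the protection
of `Y Y⁻¹` by `Z X⁻¹` only involves edges of the first half, where it is that of `Y` by `Z`.
-/

namespace DigraphListHom

variable {V W : Type*}

section Reverse

variable {H : V → V → Prop} {n : ℕ}

theorem step_not (u v : V) (b : Bool) : Step H u v (!b) ↔ Step H v u b := by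
  cases b <;> rfl

def revDir (d : Fin n → Bool) : Fin n → Bool := fun i => !d i.rev

theorem faithfulAt_comp_rev (d : Fin n → Bool) (x y : Fin (n + 1) → V) (i : Fin n) :
    FaithfulAt H (revDir d) (x ∘ Fin.rev) (y ∘ Fin.rev) i ↔ FaithfulAt H d y x i.rev := by
  simp only [FaithfulAt, revDir, Function.comp_apply, Fin.rev_castSucc, Fin.rev_succ, step_not]

theorem IsWalk.comp_rev {d : Fin n → Bool} {x : Fin (n + 1) → V} (hx : IsWalk H d x) :
    IsWalk H (revDir d) (x ∘ Fin.rev) :=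
  fun i => (faithfulAt_comp_rev d x x i).2 (hx i.rev)

theorem avoids_comp_rev {d : Fin n → Bool} {x y : Fin (n + 1) → V} :
    Avoids H (revDir d) (x ∘ Fin.rev) (y ∘ Fin.rev) ↔ Avoids H d y x := by
  simp only [Avoids, faithfulAt_comp_rev]
  exact (Fin.rev_surjective.forall (p := fun i => ¬FaithfulAt H d y x i)).symm

end Reverse

section Concat

variable {H : V → V → Prop} {m n : ℕ}

def concat (x : Fin (m + 1) → V) (x' : Fin (n + 1) → V) : Fin (m + n + 1) → V :=
  fun k => if h : (k : ℕ) ≤ m then x ⟨k, by omega⟩ else x' ⟨k - m, by omega⟩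

variable (x : Fin (m + 1) → V) (x' : Fin (n + 1) → V)

theorem concat_zero : concat x x' 0 = x 0 :=
  dif_pos (Nat.zero_le m)

theorem concat_castSucc_castAdd (j : Fin m) :
    concat x x' (Fin.castAdd n j).castSucc = x j.castSucc :=
  dif_pos j.isLt.le

theorem concat_succ_castAdd (j : Fin m) :
    concat x x' (Fin.castAdd n j).succ = x j.succ :=
  dif_pos j.isLt

theorem concat_last (h : x (Fin.last m) = x' 0) :
    concat x x' (Fin.last (m + n)) = x' (Fin.last n) := by
  rcases Nat.eq_zero_or_pos n with rfl | hn
  · exact (dif_pos le_rfl).trans h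
  · exact (dif_neg (by rw [Fin.val_last]; omega)).trans (congrArg x' (Fin.ext (by simp)))

theorem concat_castSucc_natAdd (h : x (Fin.last m) = x' 0) (j : Fin n) :
    concat x x' (Fin.natAdd m j).castSucc = x' j.castSucc := by
  rcases Nat.eq_zero_or_pos (j : ℕ) with hj | hj
  · rw [show j = ⟨0, by omega⟩ from Fin.ext hj]
    exact (dif_pos le_rfl).trans h
  · exact (dif_neg (by rw [Fin.val_castSucc, Fin.val_natAdd]; omega)).trans
      (congrArg x' (Fin.ext (by simp)))

theorem concat_succ_natAdd (j : Fin n) :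
    concat x x' (Fin.natAdd m j).succ = x' j.succ :=
  (dif_neg (by simp)).trans
    (congrArg x' (Fin.ext (by simp only [Fin.val_succ, Fin.val_natAdd]; omega)))

variable {d : Fin m → Bool} {d' : Fin n → Bool} {x y z : Fin (m + 1) → V}
  {x' y' z' : Fin (n + 1) → V}

theorem faithfulAt_concat_castAdd (j : Fin m) :
    FaithfulAt H (Fin.append d d') (concat x x') (concat y y') (Fin.castAdd n j) ↔
      FaithfulAt H d x y j := by
  rw [FaithfulAt, Fin.append_left, concat_castSucc_castAdd, concat_succ_castAdd, FaithfulAt]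

theorem faithfulAt_concat_natAdd (hx : x (Fin.last m) = x' 0) (j : Fin n) :
    FaithfulAt H (Fin.append d d') (concat x x') (concat y y') (Fin.natAdd m j) ↔
      FaithfulAt H d' x' y' j := by
  rw [FaithfulAt, Fin.append_right, concat_castSucc_natAdd _ _ hx, concat_succ_natAdd, FaithfulAt]

theorem IsWalk.concat (hx : IsWalk H d x) (hx' : IsWalk H d' x') (h : x (Fin.last m) = x' 0) :
    IsWalk H (Fin.append d d') (concat x x') := by
  intro i
  refine Fin.addCases (fun j => ?_) (fun j => ?_) i
  · exact (faithfulAt_concat_castAdd j).2 (hx j)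
  · exact (faithfulAt_concat_natAdd h j).2 (hx' j)

theorem Avoids.concat (hxy : Avoids H d x y) (hxy' : Avoids H d' x' y')
    (h : x (Fin.last m) = x' 0) : Avoids H (Fin.append d d') (concat x x') (concat y y') := by
  intro i
  refine Fin.addCases (fun j => ?_) (fun j => ?_) i
  · rw [faithfulAt_concat_castAdd]
    exact hxy j
  · rw [faithfulAt_concat_natAdd h]
    exact hxy' j

theorem Protects.concat (hprot : Protects H d x y z) (hzy' : Avoids H d' z' y')
    (hz : z (Fin.last m) = z' 0) :
    Protects H (Fin.append d d') (concat x x') (concat y y') (concat z z') := by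
  intro i j hi hj
  induction j using Fin.addCases with
  | right j => exact absurd ((faithfulAt_concat_natAdd hz j).1 hj) (hzy' j)
  | left j =>
    induction i using Fin.addCases with
    | left i =>
      exact hprot i j ((faithfulAt_concat_castAdd i).1 hi) ((faithfulAt_concat_castAdd j).1 hj)
    | right i =>
      simp only [Fin.val_castAdd, Fin.val_natAdd]
      omega

end Concat

/-- an extended `N` in which `Y` also avoids `X` yields a circular `N`. -/
theorem statement2 (H : V → V → Prop) {n : ℕ} (hn : 0 < n) (d : Fin n → Bool)
    (x y z : Fin (n + 1) → V)
    (hx : IsWalk H d x) (hy : IsWalk H d y) (hz : IsWalk H d z)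
    (hz0 : z 0 = y 0) (hzn : z (Fin.last n) = x (Fin.last n))
    (hXY : Avoids H d x y) (hprot : Protects H d x y z)
    (hYX : Avoids H d y x) :
    CircularN H := by
  have hrev (w : Fin (n + 1) → V) : w (Fin.last n) = (w ∘ Fin.rev) 0 := by simp
  have hzrev : z (Fin.last n) = (x ∘ Fin.rev) 0 := hzn.trans (hrev x)
  have hYX' : Avoids H (revDir d) (x ∘ Fin.rev) (y ∘ Fin.rev) := avoids_comp_rev.2 hYX
  refine ⟨n + n, by omega, Fin.append d (revDir d), concat x (x ∘ Fin.rev),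
    concat y (y ∘ Fin.rev), concat z (x ∘ Fin.rev), hx.concat hx.comp_rev (hrev x),
    hy.concat hy.comp_rev (hrev y), hz.concat hx.comp_rev hzrev, ?_, ?_, ?_, ?_,
    hXY.concat hYX' (hrev x), hprot.concat hYX' hzrev⟩
  · rw [concat_last _ _ (hrev x), concat_zero]
    simp
  · rw [concat_last _ _ (hrev y), concat_zero]
    simp
  · rw [concat_zero, concat_zero, hz0]
  · rw [concat_last _ _ hzrev, concat_zero]
    simp

end DigraphListHom
end

section
/- Let H be a digraph containing no circular N, and let H⁺ be its pair digraph. If C is a directed cycle in H⁺, then all arcs of C are double (i.e., for each arc (x,y)(x',y') of C, the reversed arc (x',y')(x,y) is also present in H⁺). -/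
namespace DigraphListHom

variable {V W : Type*}

/-!
Start the cycle of `H⁺` right after an arc `(p, q)` that is not double and read off the walks
`X` and `Y` of first and second coordinates, each step taken forward or backward according to
which of the two clauses of the arc definition holds. Those clauses forbid every faithful edge
`x_j y_{j+1}`, so `X` avoids `Y`. That the reverse arc `(q, p)` is missing forces the crossing
edge `p.2 q.1`, in the direction of the arc, so `Z`, which follows `Y` and switches to `X` at the
very end, is a walk from `y` to `x`. The only faithful edge from `X` to `Z` is at the last step,
so `Z` protects `Y` from `X`, and `X, Y, Z` form a circular `N`.
-/

section CycleExt

variable {α : Type*} {n : ℕ}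

def cycleExt (c : Fin (n + 1) → α) (m : ℕ) : α :=
  c (Fin.ofNat (n + 1) (m % n))

lemma cycleExt_add_period (c : Fin (n + 1) → α) (m : ℕ) : cycleExt c (m + n) = cycleExt c m := by
  simp only [cycleExt, Nat.add_mod_right]

lemma cycleExt_mod (c : Fin (n + 1) → α) (m : ℕ) : cycleExt c (m % n) = cycleExt c m := by
  simp only [cycleExt, Nat.mod_mod]

lemma cycleExt_of_lt (c : Fin (n + 1) → α) {m : ℕ} (hm : m < n) :
    cycleExt c m = c ⟨m, Nat.lt_succ_of_lt hm⟩ := by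
  unfold cycleExt
  congr 1
  ext
  simp [Nat.mod_eq_of_lt hm, Nat.mod_eq_of_lt (Nat.lt_succ_of_lt hm)]

lemma cycleExt_castSucc (c : Fin (n + 1) → α) (i : Fin n) : cycleExt c i = c i.castSucc :=
  cycleExt_of_lt c i.is_lt

lemma cycleExt_succ {c : Fin (n + 1) → α} (hclosed : c (Fin.last n) = c 0) (i : Fin n) :
    cycleExt c (i + 1) = c i.succ := by
  rcases (show (i : ℕ) + 1 ≤ n from i.is_lt).lt_or_eq with hi | hi
  · exact cycleExt_of_lt c hi
  · calc cycleExt c (i + 1) = cycleExt c (0 + n) := by rw [hi, zero_add]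
      _ = c 0 := (cycleExt_add_period c 0).trans rfl
      _ = c i.succ := by rw [← hclosed, show i.succ = Fin.last n from Fin.ext hi]

lemma cycleExt_rel {R : α → α → Prop} {c : Fin (n + 1) → α} (hn : 0 < n)
    (hclosed : c (Fin.last n) = c 0) (harc : ∀ i : Fin n, R (c i.castSucc) (c i.succ))
    (m : ℕ) : R (cycleExt c m) (cycleExt c (m + 1)) := by
  have h := harc ⟨m % n, Nat.mod_lt m hn⟩
  rwa [← cycleExt_castSucc c, ← cycleExt_succ hclosed, cycleExt_mod, ← cycleExt_mod c (m % n + 1),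
    Nat.mod_add_mod, cycleExt_mod] at h

end CycleExt

lemma pairArc_iff_exists_step {H : V → V → Prop} {p q : V × V} :
    PairArc H p q ↔ ∃ b, Step H p.1 q.1 b ∧ Step H p.2 q.2 b ∧ ¬ Step H p.1 q.2 b := by
  constructor
  · rintro (h | h)
    · exact ⟨true, by simpa [Step] using h⟩
    · exact ⟨false, by simpa [Step] using h⟩
  · rintro ⟨_ | _, h⟩ <;> simp only [Step, Bool.false_eq_true, if_true, if_false] at h
    · exact Or.inr h
    · exact Or.inl h

lemma step_of_not_pairArc_swap {H : V → V → Prop} {p q : V × V} {b : Bool}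
    (h₁ : Step H p.1 q.1 b) (h₂ : Step H p.2 q.2 b) (hrev : ¬ PairArc H q p) :
    Step H p.2 q.1 b := by
  by_contra h
  cases b <;> simp only [Step, Bool.false_eq_true, if_true, if_false] at h₁ h₂ h
  · exact hrev (Or.inl ⟨h₁, h₂, h⟩)
  · exact hrev (Or.inr ⟨h₁, h₂, h⟩)

lemma circularN_of_closed_walk_of_not_pairArc_swap {H : V → V → Prop} {k : ℕ}
    (C : ℕ → V × V) (hclosed : C (k + 1) = C 0)
    (harc : ∀ j : Fin (k + 1), PairArc H (C j) (C (j + 1)))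
    (hrev : ¬ PairArc H (C (k + 1)) (C k)) : CircularN H := by
  choose d hd using fun j => pairArc_iff_exists_step.1 (harc j)
  have hcross : Step H (C k).2 (C (k + 1)).1 (d (Fin.last k)) :=
    step_of_not_pairArc_swap (hd (Fin.last k)).1 (hd (Fin.last k)).2.1 hrev
  set z : ℕ → V := fun m => if m ≤ k then (C m).2 else (C m).1
  have hz {m : ℕ} (hm : m ≤ k) : z m = (C m).2 := if_pos hm
  have hz_last : z (k + 1) = (C (k + 1)).1 := if_neg (by omega)
  refine ⟨k + 1, k.succ_pos, d, fun j => (C j).1, fun j => (C j).2, fun j => z j,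
    fun j => (hd j).1, fun j => (hd j).2.1, fun j => ?_, congrArg Prod.fst hclosed,
    congrArg Prod.snd hclosed, hz k.zero_le, hz_last.trans (congrArg Prod.fst hclosed),
    fun j => (hd j).2.2, fun a b hxz _ => ?_⟩
  · rcases (Fin.le_last j).lt_or_eq with hj | rfl
    · show Step H (z j) (z (j + 1)) (d j)
      rw [hz j.is_le, hz (Fin.lt_def.1 hj)]
      exact (hd j).2.1
    · show Step H (z k) (z (k + 1)) (d (Fin.last k))
      rw [hz le_rfl, hz_last]
      exact hcross
  · rcases (Fin.le_last a).lt_or_eq with ha | rfl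
    · have hza : z (a + 1) = (C (a + 1)).2 := hz (Fin.lt_def.1 ha)
      exact absurd (show Step H (C a).1 (z (a + 1)) (d a) from hxz) (hza ▸ (hd a).2.2)
    · exact b.is_le

theorem statement3_general (H : V → V → Prop) (hH : ¬ CircularN H) {n : ℕ}
    (c : Fin (n + 1) → V × V) (hclosed : c (Fin.last n) = c 0)
    (harc : ∀ i : Fin n, PairArcD H (c i.castSucc) (c i.succ)) :
    ∀ i : Fin n, PairArcD H (c i.succ) (c i.castSucc) := by
  intro i
  refine ⟨(harc i).2.1, (harc i).1, by_contra fun hrev => hH ?_⟩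
  obtain ⟨k, rfl⟩ := Nat.exists_eq_add_one.2 i.pos
  have hstep := cycleExt_rel i.pos hclosed fun j => (harc j).2.2
  refine circularN_of_closed_walk_of_not_pairArc_swap (fun m => cycleExt c (i + 1 + m))
    (cycleExt_add_period c _) (fun j => hstep _) ?_
  rwa [cycleExt_add_period, Nat.add_right_comm, add_assoc, cycleExt_add_period,
    cycleExt_succ hclosed, cycleExt_castSucc]

/-- if `H` has no circular `N`, all arcs of a directed cycle of `H⁺` are double. -/
theorem statement3 (H : V → V → Prop) (hH : ¬ CircularN H) {n : ℕ} (hn : 0 < n)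
    (c : Fin (n + 1) → V × V) (hclosed : c (Fin.last n) = c 0)
    (harc : ∀ i : Fin n, PairArcD H (c i.castSucc) (c i.succ)) :
    ∀ i : Fin n, PairArcD H (c i.succ) (c i.castSucc) :=
  statement3_general H hH c hclosed harc

end DigraphListHom
end

section
/- Let H be a digraph with no circular N, with V(H⁺) ordered as p₁,…,p_m respecting the strong-component sink ordering, and let k be fixed with p_k = (a,b). Suppose P = a,a₁,…,a', Q = b,b₁,…,b', R = a,c₁,…,c' are congruent walks in H such that for every i the unordered pair {bᵢ,cᵢ} is k-allowed. If P and Q avoid each other, then R and Q avoid each other; in particular b' ≠ c'. -/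
namespace DigraphListHom

variable {V W : Type*}

/-!
By induction along the walks there is no faithful edge between `R` and `Q`. A faithful edge
`R i → Q (i+1)` would give a circular `N` with `X = Q`, `Y = P`, `Z = R`: the way back in `H⁺`
from `(Q (i+1), P (i+1))` to `(b, a)` exists because `P` and `Q` avoid each other. A faithful
edge `Q i → R (i+1)` would give one with `X = R`, `Y = Q`, `Z = Q`: now `(R (i+1), Q (i+1))` is
reachable from `(a, b) = p_k` and, being `k`-allowed, comes no later than `p_k` in the ordering,
so it lies in the strong component of `p_k` and the way back exists again. In both cases the
walks up to step `i + 1` form an "open" `N`, which closes up into a circular `N` by following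
the way back one arc of `H⁺` at a time.
-/

def IsSeqWalk (H : V → V → Prop) (e : ℕ → Bool) (m : ℕ) (x : ℕ → V) : Prop :=
  ∀ j < m, Step H (x j) (x (j + 1)) (e j)

def SeqAvoids (H : V → V → Prop) (e : ℕ → Bool) (m : ℕ) (x y : ℕ → V) : Prop :=
  ∀ j < m, ¬ Step H (x j) (y (j + 1)) (e j)

/-- The conditions of a circular `N`, except that the walks need not be closed: `X` and `Z` end
at the same (arbitrary) vertex. -/
def IsOpenN (H : V → V → Prop) (e : ℕ → Bool) (m : ℕ) (X Y Z : ℕ → V) : Prop :=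
  IsSeqWalk H e m X ∧ IsSeqWalk H e m Y ∧ IsSeqWalk H e m Z ∧
    Z 0 = Y 0 ∧ Z m = X m ∧ SeqAvoids H e m X Y ∧
    ∀ s < m, ∀ t < m, Step H (X s) (Z (s + 1)) (e s) → Step H (Z t) (Y (t + 1)) (e t) → t ≤ s

def dirSeq {n : ℕ} (d : Fin n → Bool) : ℕ → Bool :=
  fun j => if h : j < n then d ⟨j, h⟩ else true

theorem _root_.Fin.clamp_eq_castSucc {n j : ℕ} (hj : j < n) :
    Fin.clamp j n = (⟨j, hj⟩ : Fin n).castSucc :=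
  Fin.ext (min_eq_left hj.le)

theorem _root_.Fin.clamp_succ_eq_succ {n j : ℕ} (hj : j < n) :
    Fin.clamp (j + 1) n = (⟨j, hj⟩ : Fin n).succ :=
  Fin.ext (min_eq_left hj)

section Walks

variable {H : V → V → Prop} {e : ℕ → Bool} {m l : ℕ} {x y : ℕ → V}

theorem IsSeqWalk.mono (h : IsSeqWalk H e m x) (hl : l ≤ m) : IsSeqWalk H e l x :=
  fun j hj => h j (hj.trans_le hl)

theorem SeqAvoids.mono (h : SeqAvoids H e m x y) (hl : l ≤ m) : SeqAvoids H e l x y :=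
  fun j hj => h j (hj.trans_le hl)

theorem seqAvoids_zero : SeqAvoids H e 0 x y :=
  fun _ hj => absurd hj (Nat.not_lt_zero _)

theorem seqAvoids_succ :
    SeqAvoids H e (m + 1) x y ↔ SeqAvoids H e m x y ∧ ¬ Step H (x m) (y (m + 1)) (e m) := by
  simp only [SeqAvoids, Nat.lt_succ_iff_lt_or_eq, or_imp, forall_and, forall_eq]

theorem IsSeqWalk.snoc {v : V} {dir : Bool} (h : IsSeqWalk H e m x) (hv : Step H (x m) v dir) :
    IsSeqWalk H (Function.update e m dir) (m + 1) (Function.update x (m + 1) v) := by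
  intro j hj
  rcases Nat.lt_succ_iff_lt_or_eq.1 hj with hj | rfl
  · simpa [Function.update_apply, hj.ne, show j ≠ m + 1 by omega] using h j hj
  · simpa using hv

theorem SeqAvoids.snoc {v w : V} {dir : Bool} (h : SeqAvoids H e m x y)
    (hw : ¬ Step H (x m) w dir) :
    SeqAvoids H (Function.update e m dir) (m + 1) (Function.update x (m + 1) v)
      (Function.update y (m + 1) w) := by
  intro j hj
  rcases Nat.lt_succ_iff_lt_or_eq.1 hj with hj | rfl
  · simpa [Function.update_apply, hj.ne, show j ≠ m + 1 by omega] using h j hj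
  · simpa using hw

theorem isSeqWalk_dirSeq_iff {n : ℕ} {d : Fin n → Bool} {x : Fin (n + 1) → V} :
    IsSeqWalk H (dirSeq d) n (fun j => x (Fin.clamp j n)) ↔ IsWalk H d x := by
  simp only [IsSeqWalk, IsWalk, Fin.forall_iff, dirSeq]
  refine forall₂_congr fun j hj => ?_
  rw [dif_pos hj, Fin.clamp_eq_castSucc hj, Fin.clamp_succ_eq_succ hj]

theorem seqAvoids_dirSeq_iff {n : ℕ} {d : Fin n → Bool} {x y : Fin (n + 1) → V} :
    SeqAvoids H (dirSeq d) n (fun j => x (Fin.clamp j n)) (fun j => y (Fin.clamp j n)) ↔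
      Avoids H d x y := by
  simp only [SeqAvoids, Avoids, FaithfulAt, Fin.forall_iff, dirSeq]
  refine forall₂_congr fun j hj => ?_
  rw [dif_pos hj, Fin.clamp_eq_castSucc hj, Fin.clamp_succ_eq_succ hj]

end Walks

section PairDigraph

variable {H : V → V → Prop}

theorem pairArcD_of_step {u u' v v' : V} {dir : Bool} (hu : Step H u u' dir)
    (hv : Step H v v' dir) (huv : ¬ Step H u v' dir) (hne : u ≠ v) :
    PairArcD H (u, v) (u', v') := by
  refine ⟨hne, fun (h : u' = v') => huv (h ▸ hu), ?_⟩
  cases dir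
  · exact Or.inr ⟨hu, hv, huv⟩
  · exact Or.inl ⟨hu, hv, huv⟩

theorem PairArcD.exists_step {p q : V × V} (h : PairArcD H p q) :
    ∃ dir, Step H p.1 q.1 dir ∧ Step H p.2 q.2 dir ∧ ¬ Step H p.1 q.2 dir := by
  rcases h.2.2 with h | h
  · exact ⟨true, h⟩
  · exact ⟨false, h⟩

theorem PairArcD.swap {p q : V × V} (h : PairArcD H p q) : PairArcD H q.swap p.swap := by
  obtain ⟨hp, hq, h | h⟩ := h
  · exact ⟨hq.symm, hp.symm, Or.inr ⟨h.2.1, h.1, h.2.2⟩⟩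
  · exact ⟨hq.symm, hp.symm, Or.inl ⟨h.2.1, h.1, h.2.2⟩⟩

theorem PairReach.swap {p q : V × V} (h : PairReach H p q) : PairReach H q.swap p.swap := by
  induction h with
  | refl => exact .refl
  | tail _ hbc ih => exact ih.head hbc.swap

theorem pairReach_of_seqAvoids {e : ℕ → Bool} {m : ℕ} {u v : ℕ → V} (hu : IsSeqWalk H e m u)
    (hv : IsSeqWalk H e m v) (huv : SeqAvoids H e m u v) (h0 : u 0 ≠ v 0) :
    u m ≠ v m ∧ PairReach H (u 0, v 0) (u m, v m) := by
  induction m with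
  | zero => exact ⟨h0, .refl⟩
  | succ m ih =>
    obtain ⟨hne, hreach⟩ := ih (hu.mono m.le_succ) (hv.mono m.le_succ) (huv.mono m.le_succ)
    have harc := pairArcD_of_step (hu m m.lt_succ_self) (hv m m.lt_succ_self)
      (huv m m.lt_succ_self) hne
    exact ⟨harc.2.1, hreach.tail harc⟩

theorem GoodOrd.pairReach_of_le {ord : V × V → ℕ} (hord : GoodOrd H ord) {p q : V × V}
    (hp : p.1 ≠ p.2) (hq : q.1 ≠ q.2) (hpq : PairReach H p q) (hle : ord q ≤ ord p) :
    PairReach H q p := by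
  by_contra hqp
  exact (hord.2.1 p q hp hq hpq hqp).not_ge hle

end PairDigraph

section OpenN

variable {H : V → V → Prop} {e : ℕ → Bool} {m : ℕ} {X Y Z : ℕ → V}

theorem IsOpenN.circularN (h : IsOpenN H e m X Y Z) (hm : 0 < m) (hX : X m = X 0)
    (hY : Y m = Y 0) : CircularN H := by
  obtain ⟨hXw, hYw, hZw, hZ0, hZm, hXY, hprot⟩ := h
  refine ⟨m, hm, fun t => e t, fun t => X t, fun t => Y t, fun t => Z t,
    fun t => hXw t t.2, fun t => hYw t t.2, fun t => hZw t t.2, hX, hY, hZ0, hZm.trans hX,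
    fun t => hXY t t.2, fun s t => hprot s s.2 t t.2⟩

theorem IsOpenN.snoc (h : IsOpenN H e m X Y Z) {q : V × V} (hq : PairArcD H (X m, Y m) q) :
    ∃ (e' : ℕ → Bool) (X' Y' Z' : ℕ → V), IsOpenN H e' (m + 1) X' Y' Z' ∧
      X' 0 = X 0 ∧ Y' 0 = Y 0 ∧ X' (m + 1) = q.1 ∧ Y' (m + 1) = q.2 := by
  obtain ⟨hXw, hYw, hZw, hZ0, hZm, hXY, hprot⟩ := h
  obtain ⟨dir, hX, hY, hXY'⟩ := hq.exists_step
  refine ⟨Function.update e m dir, Function.update X (m + 1) q.1, Function.update Y (m + 1) q.2,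
    Function.update Z (m + 1) q.1, ⟨hXw.snoc hX, hYw.snoc hY, hZw.snoc (hZm ▸ hX), ?_, ?_, ?_, ?_⟩,
    by simp, by simp, by simp, by simp⟩
  · simpa using hZ0
  · simp
  · exact hXY.snoc hXY'
  · intro s hs t ht hXZ hZY
    have ht' : t < m := by
      refine (Nat.lt_succ_iff_lt_or_eq.1 ht).resolve_right ?_
      rintro rfl
      simp only [Function.update_self, Function.update_of_ne t.lt_succ_self.ne, hZm] at hZY
      exact hXY' hZY
    rcases Nat.lt_succ_iff_lt_or_eq.1 hs with hs | rfl
    · simp only [Function.update_apply, hs.ne, ht'.ne, if_false,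
        show s + 1 ≠ m + 1 by omega, show t ≠ m + 1 by omega, show t + 1 ≠ m + 1 by omega,
        show s ≠ m + 1 by omega] at hXZ hZY
      exact hprot s hs t ht' hXZ hZY
    · exact ht'.le

theorem IsOpenN.circularN_of_pairReach (h : IsOpenN H e m X Y Z) (hm : 0 < m)
    (hback : PairReach H (X m, Y m) (X 0, Y 0)) : CircularN H := by
  suffices key : ∀ p, PairReach H p (X 0, Y 0) → ∀ (m : ℕ) (e : ℕ → Bool) (X' Y' Z' : ℕ → V),
      IsOpenN H e m X' Y' Z' → 0 < m → X' 0 = X 0 → Y' 0 = Y 0 → (X' m, Y' m) = p →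
      CircularN H from key _ hback m e X Y Z h hm rfl rfl rfl
  intro p hp
  induction hp using Relation.ReflTransGen.head_induction_on with
  | refl =>
    rintro m e X' Y' Z' h hm hX0 hY0 hp
    obtain ⟨hXm, hYm⟩ := Prod.ext_iff.1 hp
    exact h.circularN hm (hXm.trans hX0.symm) (hYm.trans hY0.symm)
  | head harc _ ih =>
    rintro m e X' Y' Z' h - hX0 hY0 rfl
    obtain ⟨e', X'', Y'', Z'', h', hX0', hY0', hXm, hYm⟩ := h.snoc harc
    exact ih _ e' X'' Y'' Z'' h' m.succ_pos (hX0'.trans hX0) (hY0'.trans hY0) (Prod.ext hXm hYm)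

theorem circularN_of_crossing {i : ℕ} {A B C : ℕ → V} (hA : IsSeqWalk H e (i + 1) A)
    (hB : IsSeqWalk H e (i + 1) B) (hC : IsSeqWalk H e i C) (hC0 : C 0 = B 0)
    (hcross : Step H (C i) (A (i + 1)) (e i)) (hAB : SeqAvoids H e (i + 1) A B)
    (hAC : SeqAvoids H e i A C) (hback : PairReach H (A (i + 1), B (i + 1)) (A 0, B 0)) :
    CircularN H := by
  have hZ : IsSeqWalk H e (i + 1) (Function.update C (i + 1) (A (i + 1))) := by
    simpa using hC.snoc hcross
  refine IsOpenN.circularN_of_pairReach ⟨hA, hB, hZ, by simpa using hC0, by simp, hAB, ?_⟩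
    i.succ_pos hback
  -- `A` avoids `C`, so a faithful edge from `A` to `Z` can only be the one into `Z (i + 1)`
  intro s hs t ht hAZ _
  by_contra hlt
  have hs' : s < i := by omega
  exact hAC s hs' (by simpa [Function.update_of_ne (show s + 1 ≠ i + 1 by omega)] using hAZ)

end OpenN

theorem seqAvoids_of_kAllowed {H : V → V → Prop} (hH : ¬ CircularN H) {ord : V × V → ℕ}
    (hord : GoodOrd H ord) {a b : V} (hab : a ≠ b) {n : ℕ} {e : ℕ → Bool} {P Q R : ℕ → V}
    (hP : IsSeqWalk H e n P) (hQ : IsSeqWalk H e n Q) (hR : IsSeqWalk H e n R)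
    (hP0 : P 0 = a) (hQ0 : Q 0 = b) (hR0 : R 0 = a)
    (hallow : ∀ i ≤ n, KAllowed ord (ord (a, b)) (Q i) (R i))
    (hPQ : SeqAvoids H e n P Q) (hQP : SeqAvoids H e n Q P) :
    SeqAvoids H e n R Q ∧ SeqAvoids H e n Q R := by
  have hPQ0 : P 0 ≠ Q 0 := by rwa [hP0, hQ0]
  have hRQ0 : R 0 ≠ Q 0 := by rwa [hR0, hQ0]
  suffices ∀ i ≤ n, SeqAvoids H e i R Q ∧ SeqAvoids H e i Q R from this n le_rfl
  intro i
  induction i with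
  | zero => exact fun _ => ⟨seqAvoids_zero, seqAvoids_zero⟩
  | succ i ih =>
    intro hi
    obtain ⟨hRQ, hQR⟩ := ih (by omega)
    have hRQi : ¬ Step H (R i) (Q (i + 1)) (e i) := by
      intro hcross
      have hback := (pairReach_of_seqAvoids (hP.mono hi) (hQ.mono hi) (hPQ.mono hi) hPQ0).2.swap
      exact hH (circularN_of_crossing (hQ.mono hi) (hP.mono hi) (hR.mono (by omega))
        (hR0.trans hP0.symm) hcross (hQP.mono hi) hQR hback)
    have hRQ' : SeqAvoids H e (i + 1) R Q := seqAvoids_succ.2 ⟨hRQ, hRQi⟩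
    refine ⟨hRQ', seqAvoids_succ.2 ⟨hQR, fun hcross => ?_⟩⟩
    obtain ⟨hne, hreach⟩ := pairReach_of_seqAvoids (hR.mono hi) (hQ.mono hi) hRQ' hRQ0
    have hord_le : ord (R (i + 1), Q (i + 1)) ≤ ord (R 0, Q 0) := by
      rw [hR0, hQ0]
      exact ((hallow (i + 1) hi).resolve_left hne.symm).2
    exact hH (circularN_of_crossing (hR.mono hi) (hQ.mono hi) (hQ.mono (by omega)) rfl hcross
      hRQ' hRQ (hord.pairReach_of_le hRQ0 hne hreach hord_le))

/-- Lemma 4.2 ("Lemma newer"). -/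
theorem statement6 (H : V → V → Prop) (hH : ¬ CircularN H)
    (ord : V × V → ℕ) (hord : GoodOrd H ord)
    (k : ℕ) (a b : V) (hab : a ≠ b) (hk : ord (a, b) = k)
    {n : ℕ} (d : Fin n → Bool) (P Q R : Fin (n + 1) → V)
    (hP : IsWalk H d P) (hQ : IsWalk H d Q) (hR : IsWalk H d R)
    (hP0 : P 0 = a) (hQ0 : Q 0 = b) (hR0 : R 0 = a)
    (hallow : ∀ i, KAllowed ord k (Q i) (R i))
    (hPQ : Avoids H d P Q) (hQP : Avoids H d Q P) :
    (Avoids H d R Q ∧ Avoids H d Q R) ∧ Q (Fin.last n) ≠ R (Fin.last n) := by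
  subst hk
  rw [← isSeqWalk_dirSeq_iff] at hP hQ hR
  rw [← seqAvoids_dirSeq_iff] at hPQ hQP
  obtain ⟨hRQ, hQR⟩ :=
    seqAvoids_of_kAllowed hH hord hab hP hQ hR hP0 hQ0 hR0 (fun i _ => hallow _) hPQ hQP
  refine ⟨⟨seqAvoids_dirSeq_iff.1 hRQ, seqAvoids_dirSeq_iff.1 hQR⟩, ?_⟩
  have hne := (pairReach_of_seqAvoids hR hQ hRQ (hR0.trans_ne (hab.trans_eq hQ0.symm))).1
  rwa [Fin.clamp_eq_last n n le_rfl, ne_comm] at hne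

end DigraphListHom
end

section
/- A bicycle in a digraph H gives rise to a circular N; consequently, if H contains no pair of independent edges, then H has no circular N if and only if H has no bicycle. -/
/-!
Without independent edges the direction pattern of a circular `N` is constant: if consecutive
steps of `X` and `Y` had opposite directions, these steps, together with `X` avoiding `Y`, would
give two independent edges. After reversing `H` if necessary, `X` and `Y` are forward closed walks
with `X` avoiding `Y`, and the edges `yᵢxᵢ₊₁` a bicycle also needs come once more from the absence
of independent edges. Conversely, a bicycle `X, Y` is a circular `N` with `Z` equal to `Y` except
for its last vertex, replaced by `x₀`: the only faithful edge from `X` to `Z` is then the last one.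
-/

namespace DigraphListHom

variable {V W : Type*}

section

variable {H : V → V → Prop}

lemma not_independentEdges_flip (hind : ¬ IndependentEdges H) : ¬ IndependentEdges (flip H) :=
  fun ⟨a, b, c, d, hab, hcd, had, hcb⟩ => hind ⟨d, c, b, a, hcd, hab, had, hcb⟩

lemma edge_of_not_independentEdges (hind : ¬ IndependentEdges H) {a b c d : V}
    (hab : H a b) (hcd : H c d) (had : ¬ H a d) : H c b :=
  not_not.mp fun hcb => hind ⟨a, b, c, d, hab, hcd, had, hcb⟩

lemma Bicycle.of_flip (h : Bicycle (flip H)) : Bicycle H := by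
  obtain ⟨n, hn, x, y, hxx, hyy, hstep⟩ := h
  refine ⟨n, hn, fun i => y i.rev, fun i => x i.rev, by simpa using hyy.symm,
    by simpa using hxx.symm, fun i => ?_⟩
  obtain ⟨hx, hy, hxy, hyx⟩ := hstep i.rev
  rw [← Fin.rev_succ, ← Fin.rev_castSucc] at hx hy hxy hyx
  exact ⟨hy, hx, hxy, hyx⟩

/-- Two consecutive steps of walks `X` (from `a` through `m`) and `Y` (from `p` to `q`), with no
faithful edge `ap` or `mq`, have the same direction. -/
lemma dir_eq_of_not_independentEdges (hind : ¬ IndependentEdges H) {a m p q : V} {b b' : Bool}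
    (ham : Step H a m b) (hpq : Step H p q b') (hap : ¬ Step H a p b) (hmq : ¬ Step H m q b') :
    b = b' := by
  cases b <;> cases b'
  · rfl
  · exact absurd ⟨p, q, m, a, hpq, ham, hap, hmq⟩ hind
  · exact absurd ⟨a, m, q, p, ham, hpq, hap, hmq⟩ hind
  · rfl

lemma dir_const_of_avoids (hind : ¬ IndependentEdges H) {m : ℕ} {d : Fin (m + 1) → Bool}
    {x y : Fin (m + 2) → V} (hx : IsWalk H d x) (hy : IsWalk H d y) (hav : Avoids H d x y) :
    d = fun _ => d 0 := by
  have hnext (i : Fin m) : d i.castSucc = d i.succ := by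
    have hy' := hy i.succ
    have hav' := hav i.succ
    simp only [FaithfulAt, ← Fin.succ_castSucc] at hy' hav'
    exact dir_eq_of_not_independentEdges hind (hx i.castSucc) hy' (hav i.castSucc) hav'
  funext i
  induction i using Fin.induction with
  | zero => rfl
  | succ i ih => rw [← hnext i, ih]

lemma bicycle_of_avoids (hind : ¬ IndependentEdges H) {n : ℕ} (hn : 0 < n)
    {x y : Fin (n + 1) → V} (hx : IsWalk H (fun _ => true) x) (hy : IsWalk H (fun _ => true) y)
    (hxx : x (Fin.last n) = x 0) (hyy : y (Fin.last n) = y 0)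
    (hav : Avoids H (fun _ => true) x y) : Bicycle H :=
  ⟨n, hn, x, y, hxx, hyy, fun i =>
    ⟨hx i, hy i, hav i, edge_of_not_independentEdges hind (hx i) (hy i) (hav i)⟩⟩

lemma bicycle_of_avoids_of_dir_const (hind : ¬ IndependentEdges H) {n : ℕ} (hn : 0 < n)
    (b : Bool) {x y : Fin (n + 1) → V} (hx : IsWalk H (fun _ => b) x)
    (hy : IsWalk H (fun _ => b) y) (hxx : x (Fin.last n) = x 0) (hyy : y (Fin.last n) = y 0)
    (hav : Avoids H (fun _ => b) x y) : Bicycle H := by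
  cases b
  -- a walk in `H` with all steps backward is, by definition, a forward walk in `flip H`
  · exact (bicycle_of_avoids (not_independentEdges_flip hind) hn hx hy hxx hyy hav).of_flip
  · exact bicycle_of_avoids hind hn hx hy hxx hyy hav

lemma bicycle_of_circularN (hind : ¬ IndependentEdges H) (h : CircularN H) : Bicycle H := by
  obtain ⟨n, hn, d, x, y, -, hx, hy, -, hxx, hyy, -, -, hav, -⟩ := h
  obtain ⟨m, rfl⟩ := Nat.exists_eq_succ_of_ne_zero hn.ne'
  have hd := dir_const_of_avoids hind hx hy hav
  rw [hd] at hx hy hav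
  exact bicycle_of_avoids_of_dir_const hind hn (d 0) hx hy hxx hyy hav

lemma circularN_of_bicycle (h : Bicycle H) : CircularN H := by
  obtain ⟨n, hn, x, y, hxx, hyy, hstep⟩ := h
  let z := Function.update y (Fin.last n) (x 0)
  have hz_castSucc (i : Fin n) : z i.castSucc = y i.castSucc :=
    Function.update_of_ne (Fin.castSucc_ne_last i) _ _
  have hz_succ (i : Fin n) (hi : i.succ ≠ Fin.last n) : z i.succ = y i.succ :=
    Function.update_of_ne hi _ _
  have hxz (i : Fin n) (h : H (x i.castSucc) (z i.succ)) : i.succ = Fin.last n := by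
    by_contra hi
    exact (hstep i).2.2.1 (hz_succ i hi ▸ h)
  refine ⟨n, hn, fun _ => true, x, y, z, fun i => (hstep i).1, fun i => (hstep i).2.1,
    fun i => ?_, hxx, hyy, ?_, Function.update_self .., fun i => (hstep i).2.2.1, ?_⟩
  · show H (z i.castSucc) (z i.succ)
    rw [hz_castSucc]
    by_cases hi : i.succ = Fin.last n
    · simpa [z, hi, hxx] using (hstep i).2.2.2
    · simpa [hz_succ i hi] using (hstep i).2.1
  · exact Function.update_of_ne (Fin.lt_def.mpr hn).ne _ _
  · intro i j hi _
    have hi_last := Fin.val_eq_of_eq (hxz i hi)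
    simp only [Fin.val_succ, Fin.val_last] at hi_last
    omega

end

/-- a bicycle gives a circular `N`; hence, without independent edges,
no circular `N` iff no bicycle. -/
theorem statement14 (H : V → V → Prop) :
    (Bicycle H → CircularN H) ∧
    (¬ IndependentEdges H → (¬ CircularN H ↔ ¬ Bicycle H)) :=
  ⟨circularN_of_bicycle, fun hind =>
    not_congr ⟨bicycle_of_circularN hind, circularN_of_bicycle⟩⟩

end DigraphListHom
end

section
/- Define operations f₁,…,f_k on V(H) by the following case analysis (with μ(x,x) := 0): if μ(b,c) > i then fᵢ(a,b,c) = b when μ(a,b) < i and fᵢ(a,b,c) = a when μ(a,b) ≥ i; if μ(b,c) = i then fᵢ(a,b,c) = c when μ(a,c) < i or (μ(a,c) = i and a is not an i-distinguisher of a,b,c), and fᵢ(a,b,c) = a otherwise; if μ(b,c) < i then fᵢ(a,b,c) = c when μ(a,c) < i and fᵢ(a,b,c) = a when μ(a,c) ≥ i. Then f₁,…,f_k satisfy the Hagemann–Mitschke identities: f₁(x,y,y) = x, fᵢ(x,x,y) = f_{i+1}(x,y,y) for all i < k, and f_k(x,x,y) = y, provided 1 ≤ μ(x,y) ≤ k for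 all distinct x,y. -/
namespace DigraphListHom

variable {V W : Type*}

/-!
A pair digraph vertex `(x, y)` with `x ≠ y` can never reach a diagonal pair, so `μ(x, x) = 0`;
and for `i ≥ 1` the vertex `x` is never an `i`-distinguisher of `x, x, y`, because the first step
of `X` out of `x` would be a faithful edge from `Y` to `X`. Hence `fᵢ(x, y, y)` is `x` exactly when
`i ≤ μ(x, y)` and `fᵢ(x, x, y)` is `x` exactly when `i < μ(x, y)`, and the Hagemann–Mitschke
identities follow by comparing `μ(x, y)` with `i` and `i + 1`.
-/

lemma eq_of_pairReach_diag {H : V → V → Prop} {x : V} {q : V × V}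
    (h : PairReach H (x, x) q) : q = (x, x) := by
  induction h with
  | refl => rfl
  | tail _ harc ih =>
    subst ih
    exact absurd harc.1 (by simp)

lemma mu_self (H : V → V → Prop) (x : V) : mu H (x, x) = 0 := by
  suffices hchain : {m | CondChain H (x, x) m} = {0} by rw [mu, hchain, csSup_singleton]
  ext m
  simp only [Set.mem_ofPred_eq, Set.mem_singleton_iff]
  constructor
  · rintro ⟨r, hne, -, -, hlast⟩
    by_contra hm
    exact hne _ (by rw [eq_of_pairReach_diag (hlast (Nat.pos_of_ne_zero hm))])
  · rintro rfl
    exact ⟨Fin.elim0, fun i => i.elim0, fun i => i.elim0, fun i => i.elim0,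
      fun h => absurd h (lt_irrefl 0)⟩

lemma not_iDist_self_left {H : V → V → Prop} {i : ℕ} (hi : 1 ≤ i) (x y : V) :
    ¬ IDist H i x x y := by
  rintro ⟨n, d, X, Y, Z, hX, -, -, hX0, hY0, -, -, hmuXY, hYX, -⟩
  cases n with
  | zero =>
    rw [show Fin.last 0 = 0 from rfl, hX0, hY0, mu_self] at hmuXY
    omega
  | succ n =>
    have hstep : FaithfulAt H d Y X 0 := by
      simpa only [FaithfulAt, Fin.castSucc_zero, hY0, ← hX0] using hX 0
    exact hYX 0 hstep

-- The three clauses defining `f i a b c`, according as `μ(b, c)` is above, at or below `i`.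
def RuleAbove (H : V → V → Prop) (f : ℕ → V → V → V → V) : Prop :=
  ∀ (i : ℕ) (a b c : V), i < mu H (b, c) →
    (mu H (a, b) < i → f i a b c = b) ∧ (i ≤ mu H (a, b) → f i a b c = a)

def RuleAt (H : V → V → Prop) (f : ℕ → V → V → V → V) : Prop :=
  ∀ (i : ℕ) (a b c : V), mu H (b, c) = i →
    ((mu H (a, c) < i ∨ (mu H (a, c) = i ∧ ¬ IDist H i a b c)) → f i a b c = c) ∧
    ((i < mu H (a, c) ∨ (mu H (a, c) = i ∧ IDist H i a b c)) → f i a b c = a)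

def RuleBelow (H : V → V → Prop) (f : ℕ → V → V → V → V) : Prop :=
  ∀ (i : ℕ) (a b c : V), mu H (b, c) < i →
    (mu H (a, c) < i → f i a b c = c) ∧ (i ≤ mu H (a, c) → f i a b c = a)

section Rules

variable {H : V → V → Prop} {f : ℕ → V → V → V → V} {i : ℕ} {x y : V}

lemma RuleBelow.apply_dup_right_of_lt (hC : RuleBelow H f) (hi : 0 < i)
    (h : mu H (x, y) < i) : f i x y y = y :=
  (hC i x y y (by rwa [mu_self])).1 h

lemma RuleBelow.apply_dup_right_of_le (hC : RuleBelow H f) (hi : 0 < i)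
    (h : i ≤ mu H (x, y)) : f i x y y = x :=
  (hC i x y y (by rwa [mu_self])).2 h

lemma RuleAbove.apply_dup_left_of_lt (hA : RuleAbove H f) (hi : 0 < i)
    (h : i < mu H (x, y)) : f i x x y = x :=
  (hA i x x y h).1 (by rwa [mu_self])

lemma apply_dup_left_of_le (hB : RuleAt H f) (hC : RuleBelow H f) (hi : 1 ≤ i)
    (h : mu H (x, y) ≤ i) : f i x x y = y := by
  rcases h.eq_or_lt with heq | hlt
  · exact (hB i x x y heq).1 (Or.inr ⟨heq, not_iDist_self_left hi x y⟩)
  · exact (hC i x x y hlt).1 hlt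

lemma apply_diag (hB : RuleAt H f) (hC : RuleBelow H f) (i : ℕ) (x : V) :
    f i x x x = x := by
  rcases Nat.eq_zero_or_pos i with rfl | hi
  · by_cases hd : IDist H 0 x x x
    · exact (hB 0 x x x (mu_self H x)).2 (Or.inr ⟨mu_self H x, hd⟩)
    · exact (hB 0 x x x (mu_self H x)).1 (Or.inr ⟨mu_self H x, hd⟩)
  · exact apply_dup_left_of_le hB hC hi (by rw [mu_self]; exact Nat.zero_le i)

end Rules

theorem statement15_general (H : V → V → Prop) (k : ℕ)
    (f : ℕ → V → V → V → V)
    (hA : ∀ (i : ℕ) (a b c : V), i < mu H (b, c) →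
      (mu H (a, b) < i → f i a b c = b) ∧ (i ≤ mu H (a, b) → f i a b c = a))
    (hB : ∀ (i : ℕ) (a b c : V), mu H (b, c) = i →
      ((mu H (a, c) < i ∨ (mu H (a, c) = i ∧ ¬ IDist H i a b c)) → f i a b c = c) ∧
      ((i < mu H (a, c) ∨ (mu H (a, c) = i ∧ IDist H i a b c)) → f i a b c = a))
    (hC : ∀ (i : ℕ) (a b c : V), mu H (b, c) < i →
      (mu H (a, c) < i → f i a b c = c) ∧ (i ≤ mu H (a, c) → f i a b c = a))
    (hmu : ∀ x y : V, x ≠ y → 1 ≤ mu H (x, y) ∧ mu H (x, y) ≤ k) :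
    HMChain f k := by
  have hA : RuleAbove H f := hA
  have hB : RuleAt H f := hB
  have hC : RuleBelow H f := hC
  refine ⟨fun x y => ?_, fun i hi _ x y => ?_, fun x y => ?_⟩
  · rcases eq_or_ne x y with rfl | hxy
    · exact apply_diag hB hC 1 x
    · exact hC.apply_dup_right_of_le one_pos (hmu x y hxy).1
  · rcases le_or_gt (mu H (x, y)) i with hle | hlt
    · rw [apply_dup_left_of_le hB hC hi hle, hC.apply_dup_right_of_lt i.succ_pos (by omega)]
    · rw [hA.apply_dup_left_of_lt hi hlt, hC.apply_dup_right_of_le i.succ_pos hlt]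
  · rcases eq_or_ne x y with rfl | hxy
    · exact apply_diag hB hC k x
    · obtain ⟨hpos, hle⟩ := hmu x y hxy
      exact apply_dup_left_of_le hB hC (hpos.trans hle) hle

/-- the case-defined operations satisfy the Hagemann–Mitschke identities. -/
theorem statement15 [Fintype V] (H : V → V → Prop) (k : ℕ)
    (f : ℕ → V → V → V → V)
    (hA : ∀ (i : ℕ) (a b c : V), i < mu H (b, c) →
      (mu H (a, b) < i → f i a b c = b) ∧ (i ≤ mu H (a, b) → f i a b c = a))
    (hB : ∀ (i : ℕ) (a b c : V), mu H (b, c) = i →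
      ((mu H (a, c) < i ∨ (mu H (a, c) = i ∧ ¬ IDist H i a b c)) → f i a b c = c) ∧
      ((i < mu H (a, c) ∨ (mu H (a, c) = i ∧ IDist H i a b c)) → f i a b c = a))
    (hC : ∀ (i : ℕ) (a b c : V), mu H (b, c) < i →
      (mu H (a, c) < i → f i a b c = c) ∧ (i ≤ mu H (a, c) → f i a b c = a))
    (hmu : ∀ x y : V, x ≠ y → 1 ≤ mu H (x, y) ∧ mu H (x, y) ≤ k) :
    HMChain f k :=
  statement15_general H k f hA hB hC hmu

end DigraphListHom
end

section
/- Let H be a digraph with no circular N and (G,L) an instance of LHOM(H) with all lists k-good, where p_k = (a,b). Fix a vertex x of G with a,b ∈ L(x), let C(x,a,b) be the weakly connected component of (x,a,b) in the triple digraph Tr(G,L), and let G'' and L'' be as in the ab-test (in particular L''(y) excludes every d for which some (y,c,d) ∈ C(x,a,b)). Then for every vertex y of G'' one has |L''(y)| ≤ |L(y)| − 1. -/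
namespace DigraphListHom

variable {V W : Type*}

theorem TrSym.snd_mem {H : V → V → Prop} {G : W → W → Prop} {L : W → Set V}
    {p q : W × V × V} (h : TrSym H G L p q) : q.2.1 ∈ L q.1 ∧ q.2.2 ∈ L q.1 := by
  rcases h with h | h
  · exact ⟨h.2.2.1, h.2.2.2.1⟩
  · exact ⟨h.1, h.2.1⟩

theorem WConn.snd_mem_of_fst_ne {H : V → V → Prop} {G : W → W → Prop} {L : W → Set V}
    {p q : W × V × V} (h : WConn H G L p q) (hne : q.1 ≠ p.1) :
    q.2.1 ∈ L q.1 ∧ q.2.2 ∈ L q.1 := by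
  rcases Relation.ReflTransGen.cases_tail h with rfl | ⟨_, _, hstep⟩
  · exact absurd rfl hne
  · exact hstep.snd_mem

/- Every vertex `y` of `G''` carries a triple `(y, c, d)` of the component of `(x, a, b)`;
its last coordinate `d` lies in `L y` but is excluded from `L'' y`. At `y = x` the element `b`
plays this role. -/
theorem statement18_general (H : V → V → Prop)
    (G : W → W → Prop) (L : W → Set V) (hfin : ∀ w, (L w).Finite)
    (a b : V) (hab : a ≠ b)
    (x : W) (hax : a ∈ L x) (hbx : b ∈ L x)
    (Gvv : W → Prop)
    (hGvv : ∀ y, Gvv y ↔ ∃ c d, WConn H G L (x, a, b) (y, c, d))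
    (L'' : W → Set V)
    (hL''x : L'' x = {a})
    (hL'' : ∀ y, y ≠ x → L'' y =
      {c | c ∈ L y ∧ (∃ d, WConn H G L (x, a, b) (y, c, d)) ∧
        (¬ ∃ e, WConn H G L (x, a, b) (y, e, c)) ∧
        ∀ z, ¬ Gvv z →
          (G z y → ∃ t ∈ L z, H t c) ∧ (G y z → ∃ t ∈ L z, H c t)}) :
    ∀ y, Gvv y → (L'' y).ncard ≤ (L y).ncard - 1 := by
  intro y hy
  obtain ⟨c, d, hw⟩ := (hGvv y).1 hy
  have hssub : L'' y ⊂ L y := by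
    by_cases hyx : y = x
    · subst hyx
      rw [hL''x, Set.ssubset_iff_of_subset (Set.singleton_subset_iff.2 hax)]
      exact ⟨b, hbx, hab.symm⟩
    · rw [hL'' y hyx, Set.ssubset_iff_of_subset fun e he ↦ he.1]
      exact ⟨d, (hw.snd_mem_of_fst_ne hyx).2, fun hd ↦ hd.2.2.1 ⟨c, hw⟩⟩
  have hlt := Set.ncard_lt_ncard hssub (hfin y)
  omega

/-- in the `ab`-test, every vertex of `G''` loses at least one list element. -/
theorem statement18 (H : V → V → Prop) (hH : ¬ CircularN H)
    (G : W → W → Prop) (L : W → Set V) (hfin : ∀ w, (L w).Finite)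
    (ord : V × V → ℕ) (hord : GoodOrd H ord) (k : ℕ)
    (a b : V) (hab : a ≠ b) (hk : ord (a, b) = k)
    (hgood : ∀ w, ∀ u ∈ L w, ∀ v ∈ L w, KAllowed ord k u v)
    (x : W) (hax : a ∈ L x) (hbx : b ∈ L x)
    (Gvv : W → Prop)
    (hGvv : ∀ y, Gvv y ↔ ∃ c d, WConn H G L (x, a, b) (y, c, d))
    (L'' : W → Set V)
    (hL''x : L'' x = {a})
    (hL'' : ∀ y, y ≠ x → L'' y =
      {c | c ∈ L y ∧ (∃ d, WConn H G L (x, a, b) (y, c, d)) ∧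
        (¬ ∃ e, WConn H G L (x, a, b) (y, e, c)) ∧
        ∀ z, ¬ Gvv z →
          (G z y → ∃ t ∈ L z, H t c) ∧ (G y z → ∃ t ∈ L z, H c t)}) :
    ∀ y, Gvv y → (L'' y).ncard ≤ (L y).ncard - 1 :=
  statement18_general H G L hfin a b hab x hax hbx Gvv hGvv L'' hL''x hL''

end DigraphListHom
end
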